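/- The set of quadratic moves B = { e_{γ_odd} + e_{γ_even} − e_α − e_β : {α, β} a nonsorted pair of admissible tuples } is a minimal Markov basis: for every move z_0 ∈ B there exist frequency vectors x, y : V → ℕ with Σ_{α} x(α) f(α) = Σ_{α} y(α) f(α) (where f(α)_j = #{ k : α_k = j }) that cannot be connected by any finite sequence of steps ±z with z ∈ B \ {z_0} staying within the nonnegative integer vectors on V. -/

import Mathlib

open MvPolynomial Finset

variable (τ d M : ℕ) (b c s r : Fin M → ℕ)

/-- A tuple α = (α_1,…,α_τ) with entries in {1,…,d} is admissible if it is
weakly increasing and for every i ∈ {1,…,M}, c_i ≤ #{k : s_i ≤ α_k ≤ r_i} ≤ b_i. -/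
structure Admissible (α : Fin τ → ℕ) : Prop where
  mono : Monotone α
  mem : ∀ k, 1 ≤ α k ∧ α k ≤ d
  count : ∀ i : Fin M,
    c i ≤ (Finset.univ.filter fun k : Fin τ => s i ≤ α k ∧ α k ≤ r i).card ∧
    (Finset.univ.filter fun k : Fin τ => s i ≤ α k ∧ α k ≤ r i).card ≤ b i

/-- `IsSplit α β γodd γeven` : γodd and γeven are the odd- and even-position
subsequences of the weakly increasing rearrangement γ of the 2τ entries of α and β. -/
def IsSplit {τ : ℕ} (α β γodd γeven : Fin τ → ℕ) : Prop :=
  ∃ γ : Fin (2 * τ) → ℕ, Monotone γ ∧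
    ((List.ofFn γ : List ℕ) : Multiset ℕ)
      = ((List.ofFn α ++ List.ofFn β : List ℕ) : Multiset ℕ) ∧
    ∀ t : Fin τ, γodd t = γ ⟨2 * t.1, by have := t.isLt; omega⟩ ∧
      γeven t = γ ⟨2 * t.1 + 1, by have := t.isLt; omega⟩

/-- The pair (α, β), in this order, is sorted: α_1 ≤ β_1 ≤ α_2 ≤ β_2 ≤ ⋯ ≤ α_τ ≤ β_τ. -/
def PairOrdered {τ : ℕ} (α β : Fin τ → ℕ) : Prop :=
  (∀ t, α t ≤ β t) ∧ ∀ t t' : Fin τ, t.1 + 1 = t'.1 → β t ≤ α t'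

/-- The pair {α, β} is nonsorted: neither (α, β) nor (β, α) is sorted. -/
def Nonsorted {τ : ℕ} (α β : Fin τ → ℕ) : Prop :=
  ¬ (PairOrdered α β ∨ PairOrdered β α)

/-- The toric (Segre–Veronese) homomorphism π with π(y_α) = q_{α_1} ⋯ q_{α_τ},
where q_1, …, q_d are the variables of `MvPolynomial (Fin d) K` (the 1-based
entry j of α corresponds to the variable indexed by j − 1 : Fin d). -/
noncomputable def piSV (K : Type*) [Field K] :
    MvPolynomial {x : Fin τ → ℕ // Admissible τ d M b c s r x} K →ₐ[K]
      MvPolynomial (Fin d) K :=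
  aeval fun v => ∏ k : Fin τ, X (⟨v.1 k - 1, by have := v.2.mem k; omega⟩ : Fin d)

/-- The quadratic move e_{γodd} + e_{γeven} − e_α − e_β. -/
def QuadMove {V : Type*} [DecidableEq V] (α β γodd γeven : V) : V → ℤ := fun v =>
  (if v = γodd then 1 else 0) + (if v = γeven then 1 else 0)
    - (if v = α then 1 else 0) - (if v = β then 1 else 0)

/-!
Let `x = e_α + e_β` and `y = e_{γodd} + e_{γeven}` for the nonsorted pair `{α, β}` defining
`z₀`; they have the same sufficient statistic and `x ≠ y`. For a nonsorted pair `{α', β'}` the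
tuples `α', β'` differ from both halves of their split, so the negative and positive parts of
the move `z = e_{γ'odd} + e_{γ'even} - e_{α'} - e_{β'}` are disjoint. Hence `x + z ≥ 0` forces
`{α', β'} = {α, β}`, and then `z = z₀` because the split is unique; while `x - z ≥ 0` forces
`{γ'odd, γ'even} = {α, β}`, making `{α, β}` sorted. So no move of `B \ {z₀}` can be applied
to `x` at all.
-/

theorem Multiset.pair_eq_pair_iff {α : Type*} {a b c d : α} :
    ({a, b} : Multiset α) = {c, d} ↔ a = c ∧ b = d ∨ a = d ∧ b = c := by
  refine ⟨fun h => ?_, ?_⟩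
  · simp only [Multiset.insert_eq_cons, Multiset.cons_eq_cons, Multiset.singleton_inj,
      Multiset.singleton_eq_cons_iff] at h
    rcases h with h | ⟨-, cs, ⟨rfl, rfl⟩, rfl, -⟩
    · exact Or.inl h
    · exact Or.inr ⟨rfl, rfl⟩
  · rintro (⟨rfl, rfl⟩ | ⟨rfl, rfl⟩)
    · rfl
    · exact Multiset.pair_comm _ _

theorem Fin.sum_univ_two_mul {M : Type*} [AddCommMonoid M] {n : ℕ} (f : Fin (2 * n) → M) :
    ∑ u, f u = ∑ t : Fin n, (f ⟨2 * t, by omega⟩ + f ⟨2 * t + 1, by omega⟩) := by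
  rw [← (finProdFinEquiv.trans (finCongr (mul_comm n 2))).sum_comp, Fintype.sum_prod_type]
  refine sum_congr rfl fun t _ => ?_
  rw [Fin.sum_univ_two]
  congr 2 <;> ext <;> simp [finProdFinEquiv, mul_comm, add_comm]

theorem Fin.univ_val_map_eq_sum {α : Type*} {n : ℕ} (f : Fin n → α) :
    univ.val.map f = ∑ u, ({f u} : Multiset α) := by
  rw [← Multiset.sum_map_singleton (univ.val.map f), Multiset.map_map]
  rfl

theorem List.coe_ofFn_two_mul {α : Type*} {n : ℕ} (γ : Fin (2 * n) → α) :
    ((List.ofFn γ : List α) : Multiset α) =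
      ((List.ofFn fun t : Fin n => γ ⟨2 * t, by omega⟩ : List α) : Multiset α) +
      ((List.ofFn fun t : Fin n => γ ⟨2 * t + 1, by omega⟩ : List α) : Multiset α) := by
  simp only [← Fin.univ_val_map, Fin.univ_val_map_eq_sum, ← sum_add_distrib]
  exact Fin.sum_univ_two_mul _

theorem List.count_coe_ofFn {α : Type*} [DecidableEq α] {n : ℕ} (f : Fin n → α) (a : α) :
    Multiset.count a ((List.ofFn f : List α) : Multiset α) = #{k | f k = a} := by
  rw [← Fin.univ_val_map, Multiset.count_map, card_def, filter_val]
  exact congrArg _ (Multiset.filter_congr fun k _ => eq_comm)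

theorem Monotone.eq_of_coe_ofFn_eq {α : Type*} [LinearOrder α] {n : ℕ} {f g : Fin n → α}
    (hf : Monotone f) (hg : Monotone g)
    (h : ((List.ofFn f : List α) : Multiset α) = ((List.ofFn g : List α) : Multiset α)) :
    f = g :=
  List.ofFn_injective <| List.Perm.eq_of_sortedLE
    (List.sortedLE_ofFn_iff.mpr hf) (List.sortedLE_ofFn_iff.mpr hg) (Multiset.coe_eq_coe.mp h)

section QuadMove

variable {V : Type*} [DecidableEq V]

theorem quadMove_apply (a b g g' v : V) :
    QuadMove a b g g' v =
      (({g, g'} : Multiset V).count v : ℤ) - (({a, b} : Multiset V).count v : ℤ) := by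
  simp only [QuadMove, Multiset.insert_eq_cons, Multiset.count_cons, Multiset.count_singleton]
  push_cast
  ring

theorem quadMove_comm (a b g g' : V) : QuadMove a b g g' = QuadMove b a g g' := by
  funext v
  simp only [quadMove_apply, Multiset.pair_comm]

theorem neg_quadMove_apply (a b g g' v : V) : -QuadMove a b g g' v = QuadMove g g' a b v := by
  simp only [quadMove_apply, neg_sub]

theorem pair_eq_of_count_add_quadMove {A B a b g g' : V}
    (hdisj : Disjoint ({a, b} : Multiset V) {g, g'}) {p : V → ℕ}
    (hp : ∀ v, (p v : ℤ) - ({A, B} : Multiset V).count v = QuadMove a b g g' v) :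
    ({a, b} : Multiset V) = {A, B} := by
  have hle : ({a, b} : Multiset V) ≤ {A, B} := Multiset.le_iff_count.2 fun v => by
    by_cases hv : v ∈ ({g, g'} : Multiset V)
    · rw [Multiset.count_eq_zero.2 (Multiset.disjoint_right.1 hdisj hv)]
      exact Nat.zero_le _
    · have := hp v
      rw [quadMove_apply, Multiset.count_eq_zero.2 hv] at this
      omega
  exact Multiset.eq_of_le_of_card_le hle (by simp)

theorem sum_count_pair_mul [Fintype V] (A B : V) (f : V → ℕ) :
    ∑ v, ({A, B} : Multiset V).count v * f v = f A + f B := by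
  simp [Multiset.insert_eq_cons, Multiset.count_cons, Multiset.count_singleton, add_mul,
    sum_add_distrib, add_comm]

end QuadMove

section Split

variable {n : ℕ} {α β γo γe : Fin n → ℕ}

theorem isSplit_iff : IsSplit α β γo γe ↔ ∃ γ : Fin (2 * n) → ℕ, Monotone γ ∧
    ((List.ofFn γ : List ℕ) : Multiset ℕ) =
      ((List.ofFn α : List ℕ) : Multiset ℕ) + ((List.ofFn β : List ℕ) : Multiset ℕ) ∧
    ∀ t : Fin n, γo t = γ ⟨2 * t, by omega⟩ ∧ γe t = γ ⟨2 * t + 1, by omega⟩ := by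
  simp only [IsSplit, Multiset.coe_add]

theorem IsSplit.symm (h : IsSplit α β γo γe) : IsSplit β α γo γe := by
  obtain ⟨γ, hγ, hsum, hγoe⟩ := isSplit_iff.1 h
  exact isSplit_iff.2 ⟨γ, hγ, hsum.trans (add_comm _ _), hγoe⟩

theorem IsSplit.pairOrdered (h : IsSplit α β γo γe) : PairOrdered γo γe := by
  obtain ⟨γ, hγ, -, hγoe⟩ := h
  refine ⟨fun t => ?_, fun t t' htt' => ?_⟩
  · rw [(hγoe t).1, (hγoe t).2]
    exact hγ (Fin.mk_le_mk.2 (by omega))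
  · rw [(hγoe t).2, (hγoe t').1]
    exact hγ (Fin.mk_le_mk.2 (by omega))

theorem IsSplit.monotone_odd (h : IsSplit α β γo γe) : Monotone γo := by
  obtain ⟨γ, hγ, -, hγoe⟩ := h
  intro t t' htt'
  rw [(hγoe t).1, (hγoe t').1]
  exact hγ (Fin.mk_le_mk.2 (by simp only [Fin.le_def] at htt'; omega))

theorem IsSplit.monotone_even (h : IsSplit α β γo γe) : Monotone γe := by
  obtain ⟨γ, hγ, -, hγoe⟩ := h
  intro t t' htt'
  rw [(hγoe t).2, (hγoe t').2]
  exact hγ (Fin.mk_le_mk.2 (by simp only [Fin.le_def] at htt'; omega))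

theorem IsSplit.coe_ofFn_add (h : IsSplit α β γo γe) :
    ((List.ofFn γo : List ℕ) : Multiset ℕ) + ((List.ofFn γe : List ℕ) : Multiset ℕ) =
      ((List.ofFn α : List ℕ) : Multiset ℕ) + ((List.ofFn β : List ℕ) : Multiset ℕ) := by
  obtain ⟨γ, -, hsum, hγoe⟩ := isSplit_iff.1 h
  rw [← hsum, List.coe_ofFn_two_mul]
  congr 3 <;> funext t
  exacts [(hγoe t).1, (hγoe t).2]

theorem IsSplit.unique {γo' γe' : Fin n → ℕ} (h : IsSplit α β γo γe)
    (h' : IsSplit α β γo' γe') : γo' = γo ∧ γe' = γe := by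
  obtain ⟨γ, hγ, hsum, hγoe⟩ := h
  obtain ⟨γ', hγ', hsum', hγoe'⟩ := h'
  obtain rfl : γ' = γ := hγ'.eq_of_coe_ofFn_eq hγ (hsum'.trans hsum.symm)
  exact ⟨funext fun t => (hγoe' t).1.trans (hγoe t).1.symm,
    funext fun t => (hγoe' t).2.trans (hγoe t).2.symm⟩

theorem Nonsorted.symm (h : Nonsorted α β) : Nonsorted β α :=
  fun h' => h h'.symm

theorem IsSplit.left_ne (hβ : Monotone β) (hns : Nonsorted α β) (h : IsSplit α β γo γe) :
    α ≠ γo ∧ α ≠ γe := by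
  have hsum := h.coe_ofFn_add
  refine ⟨?_, ?_⟩ <;> rintro rfl
  · obtain rfl := h.monotone_even.eq_of_coe_ofFn_eq hβ (add_left_cancel hsum)
    exact hns (Or.inl h.pairOrdered)
  · obtain rfl :=
      h.monotone_odd.eq_of_coe_ofFn_eq hβ (add_right_cancel (hsum.trans (add_comm _ _)))
    exact hns (Or.inr h.pairOrdered)

theorem IsSplit.disjoint {P : (Fin n → ℕ) → Prop} {α β γo γe : Subtype P}
    (hα : Monotone α.1) (hβ : Monotone β.1) (hns : Nonsorted α.1 β.1)
    (h : IsSplit α.1 β.1 γo.1 γe.1) : Disjoint ({α, β} : Multiset (Subtype P)) {γo, γe} := by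
  obtain ⟨hαo, hαe⟩ := h.left_ne hβ hns
  obtain ⟨hβo, hβe⟩ := h.symm.left_ne hα hns.symm
  simp [Multiset.disjoint_left, ne_of_apply_ne Subtype.val hαo, ne_of_apply_ne Subtype.val hαe,
    ne_of_apply_ne Subtype.val hβo, ne_of_apply_ne Subtype.val hβe]

end Split

theorem stmt_11
    [Fintype {x : Fin τ → ℕ // Admissible τ d M b c s r x}]
    (z₀ : {x : Fin τ → ℕ // Admissible τ d M b c s r x} → ℤ)
    (hz₀ : ∃ α β γodd γeven : {x : Fin τ → ℕ // Admissible τ d M b c s r x},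
      Nonsorted α.1 β.1 ∧ IsSplit α.1 β.1 γodd.1 γeven.1 ∧
      z₀ = QuadMove α β γodd γeven) :
    ∃ x y : {x : Fin τ → ℕ // Admissible τ d M b c s r x} → ℕ,
      (∀ j : ℕ,
        ∑ v : {x : Fin τ → ℕ // Admissible τ d M b c s r x},
          x v * (Finset.univ.filter fun k : Fin τ => v.1 k = j).card
        = ∑ v : {x : Fin τ → ℕ // Admissible τ d M b c s r x},
          y v * (Finset.univ.filter fun k : Fin τ => v.1 k = j).card) ∧
      ¬ ∃ (N : ℕ) (path : ℕ → {x : Fin τ → ℕ // Admissible τ d M b c s r x} → ℕ),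
          path 0 = x ∧ path N = y ∧
          ∀ m < N, ∃ z : {x : Fin τ → ℕ // Admissible τ d M b c s r x} → ℤ,
            (∃ α β γodd γeven : {x : Fin τ → ℕ // Admissible τ d M b c s r x},
              Nonsorted α.1 β.1 ∧ IsSplit α.1 β.1 γodd.1 γeven.1 ∧
              z = QuadMove α β γodd γeven) ∧
            z ≠ z₀ ∧
            ((∀ v, (path (m + 1) v : ℤ) - (path m v : ℤ) = z v) ∨
             (∀ v, (path (m + 1) v : ℤ) - (path m v : ℤ) = - z v)) := by
  obtain ⟨A, B, Go, Ge, hns, hsp, rfl⟩ := hz₀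
  have hdisj := hsp.disjoint A.2.mono B.2.mono hns
  refine ⟨fun v => ({A, B} : Multiset _).count v, fun v => ({Go, Ge} : Multiset _).count v,
    fun j => ?_, ?_⟩
  · simp only [sum_count_pair_mul, ← List.count_coe_ofFn, ← Multiset.count_add,
      hsp.coe_ofFn_add]
  rintro ⟨_ | N, path, h0, hN, hstep⟩
  · have hAB : ({A, B} : Multiset _) = {Go, Ge} := Multiset.ext.2 (congrFun (h0.symm.trans hN))
    have hA : A ∈ ({A, B} : Multiset _) := by simp
    exact Multiset.disjoint_left.1 hdisj hA (hAB ▸ hA)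
  obtain ⟨_, ⟨a, b, g, g', hns', hsp', rfl⟩, hne, hstep₀⟩ := hstep 0 N.succ_pos
  have hdisj' := hsp'.disjoint a.2.mono b.2.mono hns'
  rw [h0] at hstep₀
  rcases hstep₀ with hadd | hsub
  · rcases Multiset.pair_eq_pair_iff.1 (pair_eq_of_count_add_quadMove hdisj' hadd) with
      ⟨rfl, rfl⟩ | ⟨rfl, rfl⟩
    · obtain ⟨hg, hg'⟩ := hsp.unique hsp'
      exact hne (by rw [Subtype.ext hg, Subtype.ext hg'])
    · obtain ⟨hg, hg'⟩ := hsp.unique hsp'.symm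
      exact hne (by rw [Subtype.ext hg, Subtype.ext hg', quadMove_comm])
  · simp only [neg_quadMove_apply] at hsub
    rcases Multiset.pair_eq_pair_iff.1 (pair_eq_of_count_add_quadMove hdisj'.symm hsub) with
      ⟨rfl, rfl⟩ | ⟨rfl, rfl⟩
    · exact hns (Or.inl hsp'.pairOrdered)
    · exact hns (Or.inr hsp'.pairOrdered)
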